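/- The set B = {x_l^{Γ,-}, h_k^Γ, x_j^{Γ,+} : k ∈ ℤ≥0, j,l ∈ ℕ+} is a ℂ-basis of the Onsager algebra realized as the fixed-point subalgebra of sl₂ ⊗ ℂ[t,t^{-1}] under the diagonal ℤ/2 action with σ·x^± = -x^∓, σ·h = -h, σ·t = t^{-1}. -/

import Mathlib

/-!
The matrices `x₋^Γ, h^Γ, x₊^Γ` form a basis of `sl₂` made of eigenvectors of `M ↦ -Mᵀ`, with
eigenvalues `-1, 1, -1`. So in the coordinates `(p, q, r)` of `M = p x₋^Γ + q h^Γ + r x₊^Γ`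
the involution `σ` becomes `(p, q, r) ↦ (-p̄, q̄, -r̄)`, where `f̄(t) = f(t⁻¹)`, and its fixed
points are the triples with `p, r` antisymmetric and `q` symmetric. It remains to see that
`tⁿ - t⁻ⁿ` (`n ≥ 1`) and `tⁿ + t⁻ⁿ` (`n ≥ 0`) are bases of the antisymmetric and symmetric
Laurent polynomials: independence is read off the coefficients of nonnegative degree, and
`f = (f ∓ f̄) / 2` puts every (anti)symmetric `f` in their span.
-/

open LaurentPolynomial

noncomputable section

/-- The (enlarged) loop algebra: `2×2` matrices over `ℂ[t,t⁻¹]`, with the commutator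
Lie bracket.  `sl₂ ⊗ ℂ[t,t⁻¹]` is its trace-zero part. -/
abbrev LoopM : Type := Matrix (Fin 2) (Fin 2) (LaurentPolynomial ℂ)

def xP : LoopM := !![0, 1; 0, 0]
def xM : LoopM := !![0, 0; 1, 0]
def hS : LoopM := !![1, 0; 0, -1]

/-- `h^Γ = -i(x⁺ - x⁻)`. -/
def hGam : LoopM := (-(C Complex.I) : LaurentPolynomial ℂ) • (xP - xM)

/-- `x₊^Γ = (1/2)(x⁺ + x⁻ - ih)`. -/
def xGamP : LoopM :=
  (C ((1 : ℂ) / 2) : LaurentPolynomial ℂ) • (xP + xM - (C Complex.I : LaurentPolynomial ℂ) • hS)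

/-- `x₋^Γ = (1/2)(x⁺ + x⁻ + ih)`. -/
def xGamM : LoopM :=
  (C ((1 : ℂ) / 2) : LaurentPolynomial ℂ) • (xP + xM + (C Complex.I : LaurentPolynomial ℂ) • hS)

/-- `h_k^Γ = h^Γ ⊗ (t^k + t^{-k})` (for all `k ∈ ℤ`; the convention `h^Γ_{-k} = h^Γ_k`
holds automatically). -/
def hGamF (k : ℤ) : LoopM := (T k + T (-k) : LaurentPolynomial ℂ) • hGam

/-- `x_j^{Γ,+} = x₊^Γ ⊗ (t^j - t^{-j})` (for all `j ∈ ℤ`; the conventions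
`x^{Γ,+}_{-j} = -x^{Γ,+}_j`, `x^{Γ,+}_0 = 0` hold automatically). -/
def xGamPF (j : ℤ) : LoopM := (T j - T (-j) : LaurentPolynomial ℂ) • xGamP

/-- `x_l^{Γ,-} = x₋^Γ ⊗ (t^l - t^{-l})`. -/
def xGamMF (l : ℤ) : LoopM := (T l - T (-l) : LaurentPolynomial ℂ) • xGamM

/-- The diagonal `ℤ/2`-action: `σ·x^± = -x^∓`, `σ·h = -h` (i.e. `M ↦ -Mᵀ` on `sl₂`)
together with `t ↦ t⁻¹`. -/
def sigmaMap (M : LoopM) : LoopM := -(Matrix.transpose (M.map (invert (R := ℂ))))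

/-- The family `B = {x_l^{Γ,-}, h_k^Γ, x_j^{Γ,+} : k ∈ ℤ≥0, j,l ∈ ℕ+}`. -/
def gammaFam : ℕ+ ⊕ ℕ ⊕ ℕ+ → LoopM :=
  Sum.elim (fun l => xGamMF ((l : ℕ) : ℤ))
    (Sum.elim (fun k => hGamF (k : ℤ)) (fun j => xGamPF ((j : ℕ) : ℤ)))

open Submodule Set

theorem LinearMap.span_range_sumElim_inl_inr {R M M' ι ι' : Type*} [Semiring R]
    [AddCommMonoid M] [Module R M] [AddCommMonoid M'] [Module R M'] (v : ι → M) (w : ι' → M') :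
    span R (Set.range (Sum.elim (inl R M M' ∘ v) (inr R M M' ∘ w))) =
      (span R (Set.range v)).prod (span R (Set.range w)) := by
  rw [Set.Sum.elim_range, Set.range_comp, Set.range_comp, span_inl_union_inr]

namespace LaurentPolynomial

section CommRing

variable {R : Type*} [CommRing R]

def antisymmT (n : ℤ) : R[T;T⁻¹] := T n - T (-n)

def symmT (n : ℤ) : R[T;T⁻¹] := T n + T (-n)

lemma antisymmT_mem_span (n : ℤ) :
    antisymmT n ∈ span R (range fun m : ℕ+ => antisymmT (R := R) m) := by
  obtain ⟨m, rfl | rfl⟩ := Int.eq_nat_or_neg n <;> obtain rfl | hm := Nat.eq_zero_or_pos m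
  · simp [antisymmT]
  · exact subset_span ⟨⟨m, hm⟩, rfl⟩
  · simp [antisymmT]
  · rw [antisymmT, neg_neg, ← neg_sub]
    exact neg_mem (subset_span ⟨⟨m, hm⟩, rfl⟩)

lemma symmT_mem_span (n : ℤ) : symmT n ∈ span R (range fun m : ℕ => symmT (R := R) m) := by
  obtain ⟨m, rfl | rfl⟩ := Int.eq_nat_or_neg n
  · exact subset_span ⟨m, rfl⟩
  · rw [symmT, neg_neg, add_comm]
    exact subset_span ⟨m, rfl⟩

lemma sub_invert_mem_span (f : R[T;T⁻¹]) :
    f - invert f ∈ span R (range fun m : ℕ+ => antisymmT (R := R) m) := by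
  induction f using LaurentPolynomial.induction_on' with
  | add f g hf hg => simpa [add_sub_add_comm] using add_mem hf hg
  | C_mul_T n a =>
    simpa [antisymmT, ← mul_sub, ← smul_eq_C_mul, smul_sub] using
      smul_mem _ a (antisymmT_mem_span n)

lemma add_invert_mem_span (f : R[T;T⁻¹]) :
    f + invert f ∈ span R (range fun m : ℕ => symmT (R := R) m) := by
  induction f using LaurentPolynomial.induction_on' with
  | add f g hf hg => simpa [add_add_add_comm] using add_mem hf hg
  | C_mul_T n a =>
    simpa [symmT, ← mul_add, ← smul_eq_C_mul] using smul_mem _ a (symmT_mem_span n)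

lemma linearIndependent_antisymmT : LinearIndependent R fun n : ℕ+ => antisymmT (R := R) n := by
  let coeffPos : R[T;T⁻¹] →ₗ[R] ℕ+ →₀ R :=
    Finsupp.lcomapDomain _ (Nat.cast_injective.comp PNat.coe_injective) ∘ₗ
      (AddMonoidAlgebra.coeffLinearEquiv R).toLinearMap
  have hcoeff : coeffPos ∘ (fun n : ℕ+ => antisymmT n) = fun n => Finsupp.single n 1 := by
    funext n
    ext m
    have := m.pos
    have := n.pos
    simp [coeffPos, antisymmT, AddMonoidAlgebra.coeffLinearEquiv, Finsupp.single_apply]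
  exact .of_comp coeffPos (hcoeff ▸ Finsupp.linearIndependent_single_one ..)

end CommRing

section Field

variable {K : Type*} [Field K] [NeZero (2 : K)]

lemma linearIndependent_symmT : LinearIndependent K fun n : ℕ => symmT (R := K) n := by
  let coeffNonneg : K[T;T⁻¹] →ₗ[K] ℕ →₀ K :=
    Finsupp.lcomapDomain _ Nat.cast_injective ∘ₗ (AddMonoidAlgebra.coeffLinearEquiv K).toLinearMap
  have hcoeff : coeffNonneg ∘ (fun n : ℕ => symmT n) =
      fun n => Finsupp.single n (if n = 0 then (2 : K) else 1) := by
    funext n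
    ext m
    simp [coeffNonneg, symmT, AddMonoidAlgebra.coeffLinearEquiv, Finsupp.single_apply]
    split_ifs <;> grind
  refine .of_comp coeffNonneg (hcoeff ▸ Finsupp.linearIndependent_single_of_ne_zero fun n => ?_)
  split_ifs <;> simp [two_ne_zero]

lemma span_antisymmT_eq_eigenspace :
    span K (range fun n : ℕ+ => antisymmT (R := K) n) =
      Module.End.eigenspace (invert (R := K)).toLinearMap (-1) := by
  refine le_antisymm (span_le.mpr ?_) fun f hf => ?_
  · rintro _ ⟨n, rfl⟩
    simp [antisymmT]
  · rw [Module.End.mem_eigenspace_iff, AlgEquiv.toLinearMap_apply, neg_one_smul] at hf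
    have hf' : f = (2⁻¹ : K) • (f - invert f) := by
      rw [hf, sub_neg_eq_add, ← two_smul K, smul_smul, inv_mul_cancel₀ two_ne_zero, one_smul]
    rw [hf']
    exact smul_mem _ _ (sub_invert_mem_span f)

lemma span_symmT_eq_eigenspace :
    span K (range fun n : ℕ => symmT (R := K) n) =
      Module.End.eigenspace (invert (R := K)).toLinearMap 1 := by
  refine le_antisymm (span_le.mpr ?_) fun f hf => ?_
  · rintro _ ⟨n, rfl⟩
    simp [symmT, add_comm]
  · rw [Module.End.mem_eigenspace_iff, AlgEquiv.toLinearMap_apply, one_smul] at hf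
    have hf' : f = (2⁻¹ : K) • (f + invert f) := by
      rw [hf, ← two_smul K, smul_smul, inv_mul_cancel₀ two_ne_zero, one_smul]
    rw [hf']
    exact smul_mem _ _ (add_invert_mem_span f)

end Field

end LaurentPolynomial

open Complex

def gammaComb : ℂ[T;T⁻¹] × ℂ[T;T⁻¹] × ℂ[T;T⁻¹] →ₗ[ℂ] LoopM :=
  (LinearMap.id.smulRight xGamM).coprod
    ((LinearMap.id.smulRight hGam).coprod (LinearMap.id.smulRight xGamP))

lemma gammaComb_apply (p q r : ℂ[T;T⁻¹]) :
    gammaComb (p, q, r) =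
      !![(I / 2) • (p - r), (1 / 2 : ℂ) • (p + r) - I • q;
        (1 / 2 : ℂ) • (p + r) + I • q, -(I / 2) • (p - r)] := by
  ext i j : 1
  fin_cases i <;> fin_cases j <;>
    simp [gammaComb, xGamM, hGam, xGamP, xP, xM, hS, smul_eq_C_mul, div_eq_mul_inv] <;> ring

lemma trace_gammaComb (p q r : ℂ[T;T⁻¹]) : Matrix.trace (gammaComb (p, q, r)) = 0 := by
  simp [gammaComb_apply, Matrix.trace_fin_two]

lemma sigmaMap_gammaComb (p q r : ℂ[T;T⁻¹]) :
    sigmaMap (gammaComb (p, q, r)) = gammaComb (-invert p, invert q, -invert r) := by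
  rw [gammaComb_apply, gammaComb_apply]
  ext i j : 1
  fin_cases i <;> fin_cases j <;> simp [sigmaMap] <;> module

def gammaCoords (M : LoopM) : ℂ[T;T⁻¹] × ℂ[T;T⁻¹] × ℂ[T;T⁻¹] :=
  ((1 / 2 : ℂ) • (M 0 1 + M 1 0) - I • M 0 0, (I / 2) • (M 0 1 - M 1 0),
    (1 / 2 : ℂ) • (M 0 1 + M 1 0) + I • M 0 0)

lemma gammaCoords_gammaComb (x : ℂ[T;T⁻¹] × ℂ[T;T⁻¹] × ℂ[T;T⁻¹]) :
    gammaCoords (gammaComb x) = x := by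
  obtain ⟨p, q, r⟩ := x
  simp only [gammaCoords, gammaComb_apply, Matrix.of_apply, Matrix.cons_val', Matrix.cons_val_zero,
    Matrix.cons_val_one, Prod.mk.injEq]
  refine ⟨?_, ?_, ?_⟩ <;> match_scalars <;> ring_nf <;> simp [I_sq] <;> ring

lemma gammaComb_injective : Function.Injective gammaComb :=
  Function.LeftInverse.injective gammaCoords_gammaComb

lemma gammaComb_gammaCoords {M : LoopM} (h : Matrix.trace M = 0) :
    gammaComb (gammaCoords M) = M := by
  rw [Matrix.trace_fin_two, add_eq_zero_iff_eq_neg] at h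
  rw [gammaCoords, gammaComb_apply]
  ext i j : 1
  fin_cases i <;> fin_cases j <;> simp [h] <;> match_scalars <;> ring_nf <;> simp [I_sq] <;> ring

lemma coe_map_gammaComb_eigenspace_prod :
    (((Module.End.eigenspace (invert (R := ℂ)).toLinearMap (-1)).prod
        ((Module.End.eigenspace (invert (R := ℂ)).toLinearMap 1).prod
          (Module.End.eigenspace (invert (R := ℂ)).toLinearMap (-1)))).map gammaComb : Set LoopM) =
      {M : LoopM | Matrix.trace M = 0 ∧ sigmaMap M = M} := by
  ext M
  simp only [map_coe, Set.mem_image, SetLike.mem_coe, Submodule.mem_prod,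
    Module.End.mem_eigenspace_iff, AlgEquiv.toLinearMap_apply, neg_one_smul, one_smul,
    Set.mem_ofPred_eq, Prod.exists]
  constructor
  · rintro ⟨p, q, r, ⟨hp, hq, hr⟩, rfl⟩
    refine ⟨trace_gammaComb p q r, ?_⟩
    rw [sigmaMap_gammaComb, hp, hq, hr, neg_neg, neg_neg]
  · rintro ⟨htr, hσ⟩
    obtain ⟨⟨p, q, r⟩, hM⟩ : ∃ x, gammaComb x = M := ⟨_, gammaComb_gammaCoords htr⟩
    subst hM
    rw [sigmaMap_gammaComb] at hσ
    have hfix := gammaComb_injective hσ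
    simp only [Prod.mk.injEq] at hfix
    obtain ⟨hp, hq, hr⟩ := hfix
    exact ⟨p, q, r, ⟨neg_eq_iff_eq_neg.mp hp, hq, neg_eq_iff_eq_neg.mp hr⟩, rfl⟩

lemma gammaFam_eq_gammaComb_comp :
    gammaFam = gammaComb ∘ Sum.elim (LinearMap.inl ℂ _ _ ∘ fun n : ℕ+ => antisymmT n)
      (LinearMap.inr ℂ _ _ ∘ Sum.elim (LinearMap.inl ℂ _ _ ∘ fun n : ℕ => symmT n)
        (LinearMap.inr ℂ _ _ ∘ fun n : ℕ+ => antisymmT n)) := by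
  funext i
  rcases i with l | k | j <;>
    simp [gammaFam, gammaComb, xGamMF, hGamF, xGamPF, antisymmT, symmT]

/-- `B` is a `ℂ`-basis of the Onsager algebra realized as the fixed-point subalgebra of
`sl₂ ⊗ ℂ[t,t⁻¹]` (trace-zero matrices) under the diagonal `ℤ/2`-action `σ`: the family
is `ℂ`-linearly independent and spans exactly the `σ`-fixed trace-zero elements. -/
theorem gammaFam_basis_of_onsager :
    LinearIndependent ℂ gammaFam ∧
      (Submodule.span ℂ (Set.range gammaFam) : Set LoopM) =
        {M : LoopM | Matrix.trace M = 0 ∧ sigmaMap M = M} := by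
  rw [gammaFam_eq_gammaComb_comp]
  constructor
  · exact (linearIndependent_inl_union_inr' linearIndependent_antisymmT
      (linearIndependent_inl_union_inr' linearIndependent_symmT linearIndependent_antisymmT)).map'
        gammaComb (LinearMap.ker_eq_bot.mpr gammaComb_injective)
  · rw [range_comp, span_image, LinearMap.span_range_sumElim_inl_inr,
      LinearMap.span_range_sumElim_inl_inr,
      span_antisymmT_eq_eigenspace, span_symmT_eq_eigenspace, coe_map_gammaComb_eigenspace_prod]
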